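/- arXiv:1910.12409 — 2 statements merged into one kernel-verified Lean document; each statement's English description precedes it below -/
import Mathlib

section
/- With R_F = R⟨1, ζ_1, …, ζ_{2n}⟩ the Nakagawa order associated to a binary form F of degree 2n+1, the products satisfy, for 1 ≤ i ≤ j ≤ 2n: ζ_i ζ_j = Σ_{k=j+1}^{min(i+j, 2n+1)} f_{i+j-k} ζ_k − Σ_{k=max(i+j-(2n+1),1)}^{i} f_{i+j-k} ζ_k, where ζ_0 = 1 and ζ_{2n+1} = −f_{2n+1}. In particular R_F is closed under multiplication. -/
private lemma sum_Icc_rev {M : Type*} [AddCommMonoid M] (F : ℕ → M) (a b : ℕ) :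
    ∑ l ∈ Finset.Icc (a + 1) b, F l = ∑ t ∈ Finset.range (b - a), F (b - t) := by
  rcases le_or_gt a b with h | h
  · rw [← Finset.Ico_add_one_right_eq_Icc, Finset.sum_Ico_eq_sum_range, ← Finset.sum_range_reflect]
    have hn : b + 1 - (a + 1) = b - a := by omega
    rw [hn]
    refine Finset.sum_congr rfl fun t ht => ?_
    rw [Finset.mem_range] at ht
    congr 1
    omega
  · rw [Finset.Icc_eq_empty (by omega), show b - a = 0 by omega]
    simp

private lemma Gsplit {k K : Type*} [CommRing k] [CommRing K] [Algebra k K]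
    (f : ℕ → k) (θ : K) (m p : ℕ) :
    (∑ b ∈ Finset.range (m + p), f b • θ ^ (m + p - b))
      = θ ^ p * (∑ b ∈ Finset.range m, f b • θ ^ (m - b))
        + ∑ c ∈ Finset.range p, f (m + c) • θ ^ (p - c) := by
  rw [Finset.range_eq_Ico, ← Finset.sum_Ico_consecutive _ (Nat.zero_le m) (Nat.le_add_right m p),
    Finset.mul_sum]
  congr 1
  · rw [← Finset.range_eq_Ico]
    refine Finset.sum_congr rfl fun b hb => ?_
    rw [Finset.mem_range] at hb
    rw [mul_smul_comm, ← pow_add]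
    congr 2
    omega
  · rw [Finset.sum_Ico_eq_sum_range, Nat.add_sub_cancel_left]
    refine Finset.sum_congr rfl fun c hc => ?_
    have e : m + p - (m + c) = p - c := by omega
    rw [e]

private lemma keyA {k K : Type*} [CommRing k] [CommRing K] [Algebra k K]
    (f : ℕ → k) (θ : K) (i j : ℕ) :
    (∑ a ∈ Finset.range i, f a • θ ^ (i - a)) * (∑ b ∈ Finset.range j, f b • θ ^ (j - b))
      = (∑ l ∈ Finset.Icc (j + 1) (i + j),
          f (i + j - l) • ∑ b ∈ Finset.range l, f b • θ ^ (l - b))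
        - ∑ l ∈ Finset.Icc 1 i,
            f (i + j - l) • ∑ b ∈ Finset.range l, f b • θ ^ (l - b) := by
  set G : ℕ → K := fun l => ∑ b ∈ Finset.range l, f b • θ ^ (l - b) with hG
  have step2 : (∑ a ∈ Finset.range i, f a • θ ^ (i - a)) * G j
      = (∑ a ∈ Finset.range i, f a • G (i + j - a))
        - ∑ a ∈ Finset.range i, f a • ∑ c ∈ Finset.range (i - a), f (j + c) • θ ^ (i - a - c) := by
    rw [Finset.sum_mul, ← Finset.sum_sub_distrib]
    refine Finset.sum_congr rfl fun a ha => ?_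
    rw [Finset.mem_range] at ha
    have h1 : i + j - a = j + (i - a) := by omega
    rw [smul_mul_assoc, h1, ← smul_sub]
    congr 1
    simp only [hG]
    rw [Gsplit f θ j (i - a)]
    exact (add_sub_cancel_right _ _).symm
  rw [step2]
  congr 1
  · -- first sums
    rw [sum_Icc_rev (fun l => f (i + j - l) • G l) j (i + j), show i + j - j = i by omega]
    refine Finset.sum_congr rfl fun a ha => ?_
    rw [Finset.mem_range] at ha
    have e1 : i + j - (i + j - a) = a := by omega
    rw [e1]
  · -- second sums
    rw [sum_Icc_rev (fun l => f (i + j - l) • G l) 0 i, Nat.sub_zero]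
    simp only [hG, Finset.smul_sum]
    have hcomm : ∀ (x : ℕ) (y : ℕ),
        x ∈ Finset.range i ∧ y ∈ Finset.range (i - x)
          ↔ x ∈ Finset.range (i - y) ∧ y ∈ Finset.range i := by
      intro x y
      simp only [Finset.mem_range]
      omega
    rw [Finset.sum_comm' hcomm]
    refine Finset.sum_congr rfl fun c hc => Finset.sum_congr rfl fun b hb => ?_
    rw [Finset.mem_range] at hc hb
    have e1 : i + j - (i - c) = j + c := by omega
    have e2 : i - b - c = i - c - b := by omega
    rw [e1, e2, smul_smul, smul_smul, mul_comm (f b)]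

/-- Nakagawa's multiplication table for the order `R_F`:
for `1 ≤ i ≤ j ≤ 2n`,
`ζ_i ζ_j = Σ_{k=j+1}^{min(i+j,2n+1)} f_{i+j-k} ζ_k − Σ_{k=max(i+j-(2n+1),1)}^{i} f_{i+j-k} ζ_k`,
where `ζ₀ = 1` and `ζ_{2n+1} = −f_{2n+1}`; in particular `R_F` is closed under
multiplication. -/
theorem stmt6 (n : ℕ) (k K : Type*) [CommRing k] [CommRing K] [Algebra k K]
    (f : ℕ → k) (θ : K)
    (hroot : ∑ i ∈ Finset.range (2 * n + 2), f i • θ ^ (2 * n + 1 - i) = 0)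
    (ζ : ℕ → K)
    (hζ0 : ζ 0 = 1)
    (hζ : ∀ m : ℕ, 1 ≤ m → m ≤ 2 * n + 1 →
      ζ m = ∑ j ∈ Finset.range m, f j • θ ^ (m - j)) :
    (∀ i j : ℕ, 1 ≤ i → i ≤ j → j ≤ 2 * n →
      ζ i * ζ j
        = ∑ l ∈ Finset.Icc (j + 1) (min (i + j) (2 * n + 1)), f (i + j - l) • ζ l
        - ∑ l ∈ Finset.Icc (max (i + j - (2 * n + 1)) 1) i, f (i + j - l) • ζ l) ∧
    (∀ a ∈ Submodule.span k (Set.range fun m : Fin (2 * n + 1) => ζ m.val),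
     ∀ b ∈ Submodule.span k (Set.range fun m : Fin (2 * n + 1) => ζ m.val),
      a * b ∈ Submodule.span k (Set.range fun m : Fin (2 * n + 1) => ζ m.val)) := by
  set f' : ℕ → k := fun a => if a ≤ 2 * n + 1 then f a else 0 with hf'
  have hroot' : ∀ p : ℕ, (∑ a ∈ Finset.range (2 * n + 2), f a • θ ^ (2 * n + 1 + p - a)) = 0 := by
    intro p
    have h0 : (∑ a ∈ Finset.range (2 * n + 2), f a • θ ^ (2 * n + 1 - a)) * θ ^ p = 0 := by
      rw [hroot, zero_mul]
    rw [Finset.sum_mul] at h0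
    rw [← h0]
    refine Finset.sum_congr rfl fun a ha => ?_
    rw [Finset.mem_range] at ha
    rw [smul_mul_assoc, ← pow_add]
    congr 2
    omega
  have hG0 : ∀ l, 2 * n + 2 ≤ l → (∑ a ∈ Finset.range l, f' a • θ ^ (l - a)) = 0 := by
    intro l hl
    rw [← Finset.sum_subset (Finset.range_subset_range.mpr hl) (fun x hx hx' => ?_)]
    · have : ∑ a ∈ Finset.range (2 * n + 2), f' a • θ ^ (l - a)
          = ∑ a ∈ Finset.range (2 * n + 2), f a • θ ^ (2 * n + 1 + (l - (2 * n + 1)) - a) := by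
        refine Finset.sum_congr rfl fun a ha => ?_
        rw [Finset.mem_range] at ha
        have e : l - a = 2 * n + 1 + (l - (2 * n + 1)) - a := by omega
        simp only [hf']
        rw [if_pos (by omega), e]
      rw [this, hroot']
    · rw [Finset.mem_range] at hx'
      simp only [hf']
      rw [if_neg (by omega), zero_smul]
  have hGζ : ∀ l, 1 ≤ l → l ≤ 2 * n + 1 → (∑ a ∈ Finset.range l, f' a • θ ^ (l - a)) = ζ l := by
    intro l h1 h2
    rw [hζ l h1 h2]
    refine Finset.sum_congr rfl fun a ha => ?_
    rw [Finset.mem_range] at ha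
    congr 1
    simp only [hf']
    rw [if_pos (by omega)]
  have hζtop : ζ (2 * n + 1) = (-f (2 * n + 1)) • ζ 0 := by
    rw [hζ0, hζ (2 * n + 1) (by omega) le_rfl, neg_smul]
    have h0 := hroot
    rw [Finset.sum_range_succ, show 2 * n + 1 - (2 * n + 1) = 0 by omega, pow_zero] at h0
    exact eq_neg_of_add_eq_zero_left h0
  have part1 : ∀ i j : ℕ, 1 ≤ i → i ≤ j → j ≤ 2 * n →
      ζ i * ζ j
        = ∑ l ∈ Finset.Icc (j + 1) (min (i + j) (2 * n + 1)), f (i + j - l) • ζ l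
        - ∑ l ∈ Finset.Icc (max (i + j - (2 * n + 1)) 1) i, f (i + j - l) • ζ l := by
    intro i j h1i hij hj
    have h1j : 1 ≤ j := le_trans h1i hij
    have key := keyA f' θ i j
    rw [hGζ i h1i (by omega), hGζ j h1j (by omega)] at key
    rw [key]
    congr 1
    · calc ∑ l ∈ Finset.Icc (j + 1) (i + j),
            f' (i + j - l) • ∑ b ∈ Finset.range l, f' b • θ ^ (l - b)
          = ∑ l ∈ Finset.Icc (j + 1) (min (i + j) (2 * n + 1)),
              f' (i + j - l) • ∑ b ∈ Finset.range l, f' b • θ ^ (l - b) := by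
            refine (Finset.sum_subset (Finset.Icc_subset_Icc_right (min_le_left _ _))
              fun l hl hl' => ?_).symm
            rw [Finset.mem_Icc] at hl hl'
            rw [hG0 l (by omega), smul_zero]
        _ = ∑ l ∈ Finset.Icc (j + 1) (min (i + j) (2 * n + 1)), f (i + j - l) • ζ l := by
            refine Finset.sum_congr rfl fun l hl => ?_
            rw [Finset.mem_Icc] at hl
            have hl2 : l ≤ 2 * n + 1 := le_trans hl.2 (min_le_right _ _)
            rw [hGζ l (by omega) hl2]
            congr 1
            simp only [hf']
            rw [if_pos (by omega)]
    · calc ∑ l ∈ Finset.Icc 1 i,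
            f' (i + j - l) • ∑ b ∈ Finset.range l, f' b • θ ^ (l - b)
          = ∑ l ∈ Finset.Icc (max (i + j - (2 * n + 1)) 1) i,
              f' (i + j - l) • ∑ b ∈ Finset.range l, f' b • θ ^ (l - b) := by
            refine (Finset.sum_subset (Finset.Icc_subset_Icc_left (le_max_right _ _))
              fun l hl hl' => ?_).symm
            rw [Finset.mem_Icc] at hl hl'
            simp only [hf']
            rw [if_neg (by omega), zero_smul]
        _ = ∑ l ∈ Finset.Icc (max (i + j - (2 * n + 1)) 1) i, f (i + j - l) • ζ l := by
            refine Finset.sum_congr rfl fun l hl => ?_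
            rw [Finset.mem_Icc] at hl
            have hl1 : 1 ≤ l := le_trans (le_max_right _ _) hl.1
            have hl2 : i + j - (2 * n + 1) ≤ l := le_trans (le_max_left _ _) hl.1
            rw [hGζ l hl1 (by omega)]
            congr 1
            simp only [hf']
            rw [if_pos (by omega)]
  refine ⟨part1, ?_⟩
  set s : Set K := Set.range fun m : Fin (2 * n + 1) => ζ m.val with hs
  have hmemζ : ∀ l, l ≤ 2 * n + 1 → ζ l ∈ Submodule.span k s := by
    intro l hl
    by_cases hl' : l ≤ 2 * n
    · exact Submodule.subset_span ⟨⟨l, by omega⟩, rfl⟩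
    · have : l = 2 * n + 1 := by omega
      rw [this, hζtop]
      exact Submodule.smul_mem _ _ (Submodule.subset_span ⟨⟨0, by omega⟩, rfl⟩)
  have hmul : ∀ p q : ℕ, p ≤ 2 * n → q ≤ 2 * n → ζ p * ζ q ∈ Submodule.span k s := by
    have main : ∀ p q, 1 ≤ p → p ≤ q → q ≤ 2 * n → ζ p * ζ q ∈ Submodule.span k s := by
      intro p q h1 h2 h3
      rw [part1 p q h1 h2 h3]
      refine Submodule.sub_mem _
        (Submodule.sum_mem _ fun l hl => Submodule.smul_mem _ _ ?_)
        (Submodule.sum_mem _ fun l hl => Submodule.smul_mem _ _ ?_)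
      · rw [Finset.mem_Icc] at hl
        exact hmemζ l (le_trans hl.2 (min_le_right _ _))
      · rw [Finset.mem_Icc] at hl
        exact hmemζ l (by omega)
    intro p q hp hq
    rcases Nat.eq_zero_or_pos p with h | h
    · rw [h, hζ0, one_mul]; exact hmemζ q (by omega)
    rcases Nat.eq_zero_or_pos q with h' | h'
    · rw [h', hζ0, mul_one]; exact hmemζ p (by omega)
    rcases le_total p q with hle | hle
    · exact main p q h hle hq
    · rw [mul_comm]; exact main q p h' hle hp
  intro a ha b hb
  have hab : a * b ∈ Submodule.span k s * Submodule.span k s := Submodule.mul_mem_mul ha hb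
  rw [Submodule.span_mul_span] at hab
  refine Submodule.span_le.mpr ?_ hab
  rintro x hx
  rw [Set.mem_mul] at hx
  obtain ⟨y, hy, z, hz, rfl⟩ := hx
  obtain ⟨p, rfl⟩ := hy
  obtain ⟨q, rfl⟩ := hz
  exact hmul p.val q.val (by omega) (by omega)
end

section
/- Let f be the squarefree part of a nonzero integer f_0 with f > 1, and define μ = Π_{p | f} (1/p² + (p−1)/p^{n+1}) and μ' = Π_{p | f} (1 − p^{-p}), products over primes dividing f. Then (1 − μ) + μ' > 1 + O(2^{-n}); more precisely, 1 − μ ≥ 1 − f^{-2} − C·2^{-n} for some constant C depending on f, and μ' ≥ 1 − Σ_p p^{-2} > 1/2, so (1−μ)+μ' ≥ 3/2 − 2^{-2} − C·2^{-n} > 1 for all sufficiently large n. -/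
open Finset

lemma aux_one_sub (s : Finset ℕ) (g : ℕ → ℝ) (h0 : ∀ i ∈ s, 0 ≤ g i)
    (h1 : ∀ i ∈ s, g i ≤ 1) :
    1 - ∑ i ∈ s, g i ≤ ∏ i ∈ s, (1 - g i) := by
  classical
  induction s using Finset.induction_on with
  | empty => simp
  | @insert j s hj hjs =>
    rw [Finset.sum_insert hj, Finset.prod_insert hj]
    have h0' : ∀ i ∈ s, 0 ≤ g i := fun i hi => h0 i (mem_insert_of_mem hi)
    have h1' : ∀ i ∈ s, g i ≤ 1 := fun i hi => h1 i (mem_insert_of_mem hi)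
    have ihs := hjs h0' h1'
    have hgj0 := h0 j (mem_insert_self j s)
    have hgj1 := h1 j (mem_insert_self j s)
    have hsum0 : 0 ≤ ∑ i ∈ s, g i := Finset.sum_nonneg h0'
    nlinarith [Finset.sum_nonneg h0']

lemma aux_prod_add (s : Finset ℕ) (a : ℕ → ℝ) (ε : ℝ) (h0 : ∀ i ∈ s, 0 ≤ a i)
    (h1 : ∀ i ∈ s, a i ≤ 1) (hε0 : 0 ≤ ε) (hε1 : ε ≤ 1) :
    ∏ i ∈ s, (a i + ε) ≤ ∏ i ∈ s, a i + ((2 : ℝ) ^ s.card - 1) * ε := by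
  classical
  induction s using Finset.induction_on with
  | empty => simp
  | @insert j s hj hjs =>
    rw [Finset.prod_insert hj, Finset.prod_insert hj, Finset.card_insert_of_notMem hj]
    have h0' : ∀ i ∈ s, 0 ≤ a i := fun i hi => h0 i (mem_insert_of_mem hi)
    have h1' : ∀ i ∈ s, a i ≤ 1 := fun i hi => h1 i (mem_insert_of_mem hi)
    have ihs := hjs h0' h1'
    have haj0 := h0 j (mem_insert_self j s)
    have haj1 := h1 j (mem_insert_self j s)
    have hP0 : 0 ≤ ∏ i ∈ s, a i := Finset.prod_nonneg h0'
    have hP1 : ∏ i ∈ s, a i ≤ 1 := Finset.prod_le_one h0' h1'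
    have hPε0 : 0 ≤ ∏ i ∈ s, (a i + ε) :=
      Finset.prod_nonneg fun i hi => by linarith [h0' i hi]
    have hc : (1 : ℝ) ≤ 2 ^ s.card := one_le_pow₀ one_le_two
    have hC0 : (0:ℝ) ≤ 2 ^ s.card - 1 := by linarith
    have step : (a j + ε) * ∏ i ∈ s, (a i + ε)
        ≤ (a j + ε) * (∏ i ∈ s, a i + ((2:ℝ) ^ s.card - 1) * ε) := by
      apply mul_le_mul_of_nonneg_left ihs (by linarith)
    refine step.trans ?_
    rw [pow_succ]
    nlinarith [mul_nonneg (sub_nonneg.mpr haj1) (mul_nonneg hC0 hε0),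
      mul_nonneg hε0 (sub_nonneg.mpr hP1),
      mul_nonneg (mul_nonneg hC0 hε0) (sub_nonneg.mpr hε1)]

lemma aux_geom (s : Finset ℕ) (hs : ∀ p ∈ s, 2 ≤ p) :
    ∑ p ∈ s, ((2:ℝ)⁻¹) ^ p < 1 / 2 := by
  set K := s.sup id + 2 with hK
  have hsub : s ⊆ Finset.Ico 2 K := by
    intro p hp
    rw [Finset.mem_Ico]
    exact ⟨hs p hp, lt_of_le_of_lt (Finset.le_sup (f := id) hp) (by omega)⟩
  have h1 : ∑ p ∈ s, ((2:ℝ)⁻¹) ^ p ≤ ∑ p ∈ Finset.Ico 2 K, ((2:ℝ)⁻¹) ^ p :=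
    Finset.sum_le_sum_of_subset_of_nonneg hsub (fun i _ _ => by positivity)
  refine h1.trans_lt ?_
  have h2K : 2 ≤ K := by omega
  have hsplit : ∑ p ∈ Finset.Ico 0 2, ((2:ℝ)⁻¹) ^ p + ∑ p ∈ Finset.Ico 2 K, ((2:ℝ)⁻¹) ^ p
      = ∑ p ∈ Finset.Ico 0 K, ((2:ℝ)⁻¹) ^ p :=
    Finset.sum_Ico_consecutive _ (by omega) h2K
  have hgeom : ∑ p ∈ Finset.range K, ((2:ℝ)⁻¹) ^ p = (((2:ℝ)⁻¹) ^ K - 1) / ((2:ℝ)⁻¹ - 1) :=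
    geom_sum_eq (by norm_num) K
  have hKpos : (0:ℝ) < ((2:ℝ)⁻¹) ^ K := by positivity
  have e1 : Finset.Ico 0 K = Finset.range K := by rw [Finset.range_eq_Ico]
  have e2 : Finset.Ico 0 2 = Finset.range 2 := by rw [Finset.range_eq_Ico]
  rw [e1, e2, hgeom] at hsplit
  have : ∑ p ∈ Finset.range 2, ((2:ℝ)⁻¹) ^ p = 3/2 := by
    simp [Finset.sum_range_succ]; norm_num
  rw [this] at hsplit
  have : ∑ p ∈ Finset.Ico 2 K, ((2:ℝ)⁻¹) ^ p = 1/2 - 2 * ((2:ℝ)⁻¹) ^ K := by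
    field_simp at hsplit ⊢; linarith
  rw [this]; linarith

/-- with `f ≥ 2` squarefree,
`μ_n = Π_{p|f}(1/p² + (p−1)/p^{n+1})` and `μ' = Π_{p|f}(1 − p^{−p})`, one has
`1 − μ_n ≥ 1 − f^{−2} − C·2^{−n}`, `μ' ≥ 1 − Σ_p p^{−2} > 1/2`, and
`(1 − μ_n) + μ' > 1` for all sufficiently large `n`. -/
theorem stmt18 (f : ℕ) (hf : 2 ≤ f) (hsf : Squarefree f)
    (μ : ℕ → ℝ)
    (hμ : ∀ n : ℕ, μ n = ∏ p ∈ f.primeFactors,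
      ((p : ℝ) ^ (-(2 : ℤ)) + ((p : ℝ) - 1) * (p : ℝ) ^ (-((n : ℤ) + 1))))
    (μ' : ℝ)
    (hμ' : μ' = ∏ p ∈ f.primeFactors, (1 - (p : ℝ) ^ (-(p : ℤ)))) :
    (∃ C : ℝ, ∀ n : ℕ,
      1 - (f : ℝ) ^ (-(2 : ℤ)) - C * (2 : ℝ) ^ (-(n : ℤ)) ≤ 1 - μ n) ∧
    (1 - ∑' q : {q : ℕ // q.Prime}, ((q : ℕ) : ℝ) ^ (-(2 : ℤ)) ≤ μ') ∧
    (1 / 2 < μ') ∧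
    (∃ N : ℕ, ∀ n : ℕ, N ≤ n → 1 < (1 - μ n) + μ') := by
  classical
  set S := f.primeFactors with hS
  have hp2 : ∀ p ∈ S, 2 ≤ p := fun p hp => (Nat.prime_of_mem_primeFactors hp).two_le
  have hp2R : ∀ p ∈ S, (2:ℝ) ≤ (p:ℝ) := fun p hp => by exact_mod_cast hp2 p hp
  -- g p := p^{-p}
  have hg_eq : ∀ p : ℕ, (p:ℝ) ^ (-(p:ℤ)) = ((p:ℝ) ^ p)⁻¹ := fun p => by
    rw [zpow_neg, zpow_natCast]
  have hg0 : ∀ p ∈ S, 0 ≤ (p:ℝ) ^ (-(p:ℤ)) := fun p _ => by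
    rw [hg_eq]; positivity
  have hg_le_half : ∀ p ∈ S, (p:ℝ) ^ (-(p:ℤ)) ≤ ((2:ℝ)⁻¹) ^ p := by
    intro p hp
    rw [hg_eq, inv_pow]
    have h2p : (0:ℝ) < 2 ^ p := by positivity
    exact inv_anti₀ h2p (pow_le_pow_left₀ (by norm_num) (hp2R p hp) p)
  have hg_le_sq : ∀ p ∈ S, (p:ℝ) ^ (-(p:ℤ)) ≤ (p:ℝ) ^ (-(2:ℤ)) := by
    intro p hp
    rw [hg_eq, zpow_neg, zpow_two]
    have hpR : (1:ℝ) ≤ (p:ℝ) := by linarith [hp2R p hp]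
    have : (p:ℝ) * (p:ℝ) ≤ (p:ℝ) ^ p := by
      calc (p:ℝ) * p = (p:ℝ) ^ 2 := by ring
        _ ≤ (p:ℝ) ^ p := pow_le_pow_right₀ hpR (hp2 p hp)
    exact inv_anti₀ (by nlinarith) this
  have hg1 : ∀ p ∈ S, (p:ℝ) ^ (-(p:ℤ)) ≤ 1 := by
    intro p hp
    refine (hg_le_half p hp).trans ?_
    calc ((2:ℝ)⁻¹) ^ p ≤ 1 ^ p := pow_le_pow_left₀ (by norm_num) (by norm_num) p
      _ = 1 := one_pow p
  -- μ' bounds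
  have hμ'_ge : 1 - ∑ p ∈ S, (p:ℝ) ^ (-(p:ℤ)) ≤ μ' := by
    rw [hμ']; exact aux_one_sub S _ hg0 hg1
  have hsum_half : ∑ p ∈ S, (p:ℝ) ^ (-(p:ℤ)) < 1/2 :=
    lt_of_le_of_lt (Finset.sum_le_sum hg_le_half) (aux_geom S hp2)
  have part3 : 1/2 < μ' := by linarith
  -- summability
  have hsumm : Summable (fun q : {q : ℕ // q.Prime} => ((q:ℕ):ℝ) ^ (-(2:ℤ))) := by
    have h1 : Summable (fun n : ℕ => ((n:ℝ))^(-(2:ℤ))) := by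
      have := Real.summable_one_div_nat_pow.mpr (by norm_num : 1 < 2)
      refine this.congr fun n => ?_
      rw [zpow_neg, one_div]
      norm_cast
    exact h1.subtype _
  have part2 : 1 - ∑' q : {q : ℕ // q.Prime}, ((q:ℕ):ℝ) ^ (-(2:ℤ)) ≤ μ' := by
    have hT : ∑ p ∈ S, (p:ℝ) ^ (-(2:ℤ))
        ≤ ∑' q : {q : ℕ // q.Prime}, ((q:ℕ):ℝ) ^ (-(2:ℤ)) := by
      set T : Finset {q : ℕ // q.Prime} := S.attach.map
        ⟨fun x => ⟨x.1, Nat.prime_of_mem_primeFactors x.2⟩,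
         by
           intro a b hab
           simp only [Subtype.mk.injEq] at hab
           exact Subtype.ext hab⟩ with hT
      have heq : ∑ q ∈ T, ((q:ℕ):ℝ) ^ (-(2:ℤ)) = ∑ p ∈ S, (p:ℝ) ^ (-(2:ℤ)) := by
        rw [hT, Finset.sum_map]
        exact Finset.sum_attach S (fun p => ((p:ℕ):ℝ) ^ (-(2:ℤ)))
      rw [← heq]
      exact Summable.sum_le_tsum T (fun i _ => by
        rw [zpow_neg]; positivity) hsumm
    have := Finset.sum_le_sum hg_le_sq
    linarith
  -- Part 1
  set k := S.card with hk
  have part1 : ∀ n : ℕ,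
      1 - (f:ℝ) ^ (-(2:ℤ)) - ((2:ℝ)^k - 1) * (2:ℝ) ^ (-(n:ℤ)) ≤ 1 - μ n := by
    intro n
    set ε : ℝ := (2:ℝ) ^ (-(n:ℤ)) with hε
    have hεe : ε = ((2:ℝ)^n)⁻¹ := by rw [hε, zpow_neg, zpow_natCast]
    have hε0 : 0 ≤ ε := by rw [hεe]; positivity
    have hε1 : ε ≤ 1 := by
      rw [hεe]
      exact inv_le_one_of_one_le₀ (one_le_pow₀ one_le_two)
    have ha0 : ∀ p ∈ S, 0 ≤ (p:ℝ) ^ (-(2:ℤ)) := fun p _ => by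
      rw [zpow_neg]; positivity
    have ha1 : ∀ p ∈ S, (p:ℝ) ^ (-(2:ℤ)) ≤ 1 := by
      intro p hp
      rw [zpow_neg]
      refine inv_le_one_of_one_le₀ ?_
      have := hp2R p hp
      calc (1:ℝ) ≤ 2 ^ (2:ℤ) := by norm_num
        _ ≤ (p:ℝ) ^ (2:ℤ) := by
            rw [show ((2:ℤ)) = ((2:ℕ):ℤ) by norm_num, zpow_natCast, zpow_natCast]
            exact pow_le_pow_left₀ (by norm_num) this 2
    have hfac : ∀ p ∈ S,
        (p:ℝ) ^ (-(2:ℤ)) + ((p:ℝ) - 1) * (p:ℝ) ^ (-((n:ℤ)+1)) ≤ (p:ℝ) ^ (-(2:ℤ)) + ε := by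
      intro p hp
      have hpR := hp2R p hp
      have he : (p:ℝ) ^ (-((n:ℤ)+1)) = ((p:ℝ) ^ (n+1))⁻¹ := by
        rw [show (-((n:ℤ)+1)) = -((n+1 : ℕ) : ℤ) by push_cast; ring, zpow_neg, zpow_natCast]
      have hppos : (0:ℝ) < (p:ℝ) ^ (n+1) := by positivity
      have step : ((p:ℝ) - 1) * ((p:ℝ) ^ (n+1))⁻¹ ≤ ((p:ℝ)^n)⁻¹ := by
        rw [pow_succ]
        rw [mul_inv]
        have h1 : ((p:ℝ) - 1) * (((p:ℝ)^n)⁻¹ * (p:ℝ)⁻¹) ≤ (p:ℝ) * (((p:ℝ)^n)⁻¹ * (p:ℝ)⁻¹) := by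
          apply mul_le_mul_of_nonneg_right (by linarith)
          positivity
        refine h1.trans ?_
        rw [mul_comm ((p:ℝ)^n)⁻¹ ((p:ℝ)⁻¹), ← mul_assoc,
          mul_inv_cancel₀ (by linarith : (p:ℝ) ≠ 0), one_mul]
      have step2 : ((p:ℝ)^n)⁻¹ ≤ ((2:ℝ)^n)⁻¹ :=
        inv_anti₀ (by positivity) (pow_le_pow_left₀ (by norm_num) hpR n)
      rw [he, hεe]
      linarith
    have hμn := hμ n
    have step1 : μ n ≤ ∏ p ∈ S, ((p:ℝ) ^ (-(2:ℤ)) + ε) := by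
      rw [hμn]
      apply Finset.prod_le_prod
      · intro p hp
        have hpR := hp2R p hp
        have : (0:ℝ) ≤ ((p:ℝ) - 1) * (p:ℝ) ^ (-((n:ℤ)+1)) := by
          apply mul_nonneg (by linarith)
          apply zpow_nonneg; positivity
        have := ha0 p hp
        linarith
      · exact hfac
    have step2 := aux_prod_add S (fun p => (p:ℝ) ^ (-(2:ℤ))) ε ha0 ha1 hε0 hε1
    have hprodf : ∏ p ∈ S, (p:ℝ) ^ (-(2:ℤ)) = (f:ℝ) ^ (-(2:ℤ)) := by
      calc ∏ p ∈ S, (p:ℝ) ^ (-(2:ℤ)) = ∏ p ∈ S, (((p:ℝ))^(2:ℕ))⁻¹ :=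
            Finset.prod_congr rfl fun p _ => by rw [zpow_neg]; norm_cast
        _ = ((∏ p ∈ S, (p:ℝ))^(2:ℕ))⁻¹ := by
            rw [← Finset.prod_pow, Finset.prod_inv_distrib]
        _ = (((f:ℕ):ℝ)^(2:ℕ))⁻¹ := by
            rw [← Nat.cast_prod, hS, Nat.prod_primeFactors_of_squarefree hsf]
        _ = (f:ℝ) ^ (-(2:ℤ)) := by rw [zpow_neg]; norm_cast
    rw [hprodf] at step2
    have : μ n ≤ (f:ℝ) ^ (-(2:ℤ)) + ((2:ℝ)^k - 1) * ε := le_trans step1 step2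
    linarith
  refine ⟨⟨(2:ℝ)^k - 1, part1⟩, part2, part3, ⟨k + 3, ?_⟩⟩
  intro n hn
  have h1 := part1 n
  have hf2 : (f:ℝ) ^ (-(2:ℤ)) ≤ 1/4 := by
    rw [zpow_neg]
    rw [show ((2:ℤ)) = ((2:ℕ):ℤ) by norm_num, zpow_natCast]
    have hfR : (2:ℝ) ≤ (f:ℝ) := by exact_mod_cast hf
    have : (4:ℝ) ≤ (f:ℝ)^2 := by nlinarith
    rw [show (1:ℝ)/4 = (4:ℝ)⁻¹ by norm_num]
    exact inv_anti₀ (by norm_num) this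
  have hsmall : ((2:ℝ)^k - 1) * (2:ℝ) ^ (-(n:ℤ)) ≤ 1/8 := by
    have he : (2:ℝ) ^ (-(n:ℤ)) = ((2:ℝ)^n)⁻¹ := by rw [zpow_neg, zpow_natCast]
    have hpos : (0:ℝ) < (2:ℝ)^n := by positivity
    have hmono : (2:ℝ)^(k+3) ≤ (2:ℝ)^n := pow_le_pow_right₀ one_le_two hn
    have hinv : ((2:ℝ)^n)⁻¹ ≤ ((2:ℝ)^(k+3))⁻¹ := inv_anti₀ (by positivity) hmono
    have hk0 : (0:ℝ) < (2:ℝ)^k := by positivity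
    have : ((2:ℝ)^k - 1) * ((2:ℝ)^n)⁻¹ ≤ (2:ℝ)^k * ((2:ℝ)^(k+3))⁻¹ := by
      apply mul_le_mul (by linarith) hinv (by positivity) (by positivity)
    rw [he]
    refine this.trans ?_
    rw [pow_add]
    rw [mul_inv]
    rw [← mul_assoc, mul_inv_cancel₀ (ne_of_gt hk0), one_mul]
    norm_num
  linarith
end
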